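/- Let q be a Boolean self-join-free conjunctive query over a tuple-independent probabilistic database D that satisfies a set Γ of functional dependencies, where Γ is the union of functional dependencies each holding on the attributes of a single relation of D. For an atom R_i(x̄_i), let x̄_i⁺ denote the closure of x̄_i under Γ. Then dissociating the relation R_i on any variable y ∈ x̄_i⁺ ∖ x̄_i does not change the probability: if Δ' is obtained from a dissociation Δ by additionally adding such a variable y to ȳ_i, then P(q^{Δ'}) = P(q^Δ). -/

import Mathlib

open scoped Classical

namespace PDB

noncomputable section

/-! ### Monotone DNF formulas over a finite variable set -/

/-- Probability that a monotone DNF formula (given by its finite set of implicants, each a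
finite set of positive variables) is true, when each variable `x` is independently true with
probability `p x`. -/
def dnfProb {X : Type*} [Fintype X] (p : X → ℝ) (F : Finset (Finset X)) : ℝ :=
  ∑ ω : X → Bool,
    (∏ x : X, if ω x = true then p x else 1 - p x) *
      (if ∃ T ∈ F, ∀ x ∈ T, ω x = true then 1 else 0)

/-- A prime implicant of a monotone DNF formula: a minimal implicant. -/
def IsPrimeImplicant {X : Type*} (F : Finset (Finset X)) (T : Finset X) : Prop :=
  T ∈ F ∧ ∀ S ∈ F, S ⊆ T → S = T

variable {A V dom : Type*}

/-! ### Self-join-free conjunctive queries: hierarchy and connectivity.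
A self-join-free conjunctive query is given by its atoms: a family `atoms : A → Finset V`
assigning to each of the (pairwise distinct) relation symbols its finite set of variables;
`H` denotes the set of head variables (treated as constants); all other variables are
existential.  A Boolean query has `H = ∅`. -/

/-- `at(x)`: the atoms among `S` that contain the variable `x`. -/
def atOf (atoms : A → Finset V) (S : Finset A) (x : V) : Finset A :=
  S.filter (fun i => x ∈ atoms i)

/-- The query consisting of the atoms `S` is hierarchical, with the variables in `H`
treated as constants (head variables): for any two existential variables, their atom sets
are comparable or disjoint. -/
def HierOn (atoms : A → Finset V) (S : Finset A) (H : Finset V) : Prop :=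
  ∀ x : V, x ∉ H → ∀ y : V, y ∉ H →
    atOf atoms S x ⊆ atOf atoms S y ∨ atOf atoms S x ∩ atOf atoms S y = ∅ ∨
      atOf atoms S y ⊆ atOf atoms S x

/-- A Boolean query (with all its atoms) is hierarchical. -/
def Hier [Fintype A] (atoms : A → Finset V) : Prop :=
  HierOn atoms Finset.univ ∅

/-- The set of atoms `S` is disconnected: it can be partitioned into two nonempty sets
sharing no variables. -/
def Disconn (atoms : A → Finset V) (S : Finset A) : Prop :=
  ∃ T : Finset A, T ⊆ S ∧ T.Nonempty ∧ (S \ T).Nonempty ∧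
    ∀ i ∈ T, ∀ j ∈ S \ T, atoms i ∩ atoms j = ∅

/-- `T` is a connected component of the set of atoms `S`: a maximal connected subset. -/
def IsComp (atoms : A → Finset V) (S T : Finset A) : Prop :=
  T ⊆ S ∧ T.Nonempty ∧ ¬ Disconn atoms T ∧
    ∀ U : Finset A, T ⊆ U → U ⊆ S → ¬ Disconn atoms U → U = T

/-- `xs` is a cut-set of the query with atoms `S`: a set of its variables whose removal
disconnects the query. -/
def IsCutSet (atoms : A → Finset V) (S : Finset A) (xs : Finset V) : Prop :=
  xs ⊆ S.sup atoms ∧ Disconn (fun i => atoms i \ xs) S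

/-- a minimal cut-set (min-cut-set) -/
def MinCut (atoms : A → Finset V) (S : Finset A) (xs : Finset V) : Prop :=
  IsCutSet atoms S xs ∧ ∀ ys : Finset V, ys ⊂ xs → ¬ IsCutSet atoms S ys

/-- the separator variables of a Boolean query: the variables occurring in every atom -/
def SepVars [Fintype A] [Fintype V] (atoms : A → Finset V) : Finset V :=
  Finset.univ.filter (fun x => ∀ i : A, x ∈ atoms i)

/-- the set of variables of a query -/
def varsOf [Fintype A] (atoms : A → Finset V) : Finset V :=
  Finset.univ.sup atoms

/-! ### Dissociations -/

/-- `Δ` is a dissociation of the query with atoms `atoms` and head variables `H`: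
each atom receives extra existential variables of the query that it does not already
contain. -/
def IsDiss [Fintype A] (atoms : A → Finset V) (H : Finset V) (Δ : A → Finset V) : Prop :=
  ∀ i : A, Δ i ⊆ (varsOf atoms \ H) \ atoms i

/-- the atoms of the dissociated query `q^Δ` -/
def dissAtoms (atoms Δ : A → Finset V) : A → Finset V := fun i => atoms i ∪ Δ i

/-- the partial dissociation order `Δ ≼ Δ'` -/
def dissLE (Δ Δ' : A → Finset V) : Prop := ∀ i : A, Δ i ⊆ Δ' i

/-- a safe dissociation: the dissociated query is hierarchical -/
def SafeDiss [Fintype A] (atoms : A → Finset V) (H : Finset V) (Δ : A → Finset V) : Prop :=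
  IsDiss atoms H Δ ∧ HierOn (dissAtoms atoms Δ) Finset.univ H

/-- a minimal safe dissociation: no smaller dissociation (in the order `≼`) is safe -/
def MinSafeDiss [Fintype A] (atoms : A → Finset V) (H : Finset V) (Δ : A → Finset V) : Prop :=
  SafeDiss atoms H Δ ∧
    ∀ Δ' : A → Finset V, SafeDiss atoms H Δ' → dissLE Δ' Δ → Δ' = Δ

/-! ### Tuple-independent probabilistic databases -/

/-- A tuple-independent probabilistic database for the query with atoms `atoms` over the
finite domain `dom`: each relation `i` is a finite set of tuples (functions from the
variables of the atom to the domain), each carrying a probability. -/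
structure DB (atoms : A → Finset V) (dom : Type*) where
  tuples : ∀ i : A, Finset ({x // x ∈ atoms i} → dom)
  prob : ∀ i : A, ({x // x ∈ atoms i} → dom) → ℝ

/-- all tuple probabilities lie in [0,1] -/
def DB.Valid {atoms : A → Finset V} (D : DB atoms dom) : Prop :=
  ∀ i : A, ∀ t ∈ D.tuples i, 0 ≤ D.prob i t ∧ D.prob i t ≤ 1

/-- the restriction of a valuation of all variables to the tuple format of atom `i` -/
def restrict (atoms : A → Finset V) (i : A) (ν : V → dom) : {x // x ∈ atoms i} → dom :=
  fun x => ν x.1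

/-- restriction of a tuple to a smaller variable set -/
def restrictTup {xs ys : Finset V} (h : xs ⊆ ys) (t : {x // x ∈ ys} → dom) :
    {x // x ∈ xs} → dom :=
  fun x => t ⟨x.1, h x.2⟩

/-- `P(q)`: the probability that the Boolean query with atoms `atoms` is true in a possible
world chosen by independently including each tuple `t` of `D` with probability `p(t)`. -/
def queryProb [Fintype A] (atoms : A → Finset V) (D : DB atoms dom) : ℝ :=
  ∑ W : ∀ i : A, {t // t ∈ D.tuples i} → Bool,
    (∏ i : A, ∏ t : {t // t ∈ D.tuples i},
        if W i t = true then D.prob i t.1 else 1 - D.prob i t.1) *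
      (if ∃ ν : V → dom, ∀ i : A,
            ∃ h : restrict atoms i ν ∈ D.tuples i, W i ⟨restrict atoms i ν, h⟩ = true
        then 1 else 0)

/-- The dissociated database `D^Δ`: relation `R_i^{ȳ_i}` contains one copy of each tuple
`t ∈ R_i` for every assignment of the added variables `ȳ_i` to domain values, with the same
probability as `t`. -/
def dissDB [Fintype dom] (atoms Δ : A → Finset V) (D : DB atoms dom) :
    DB (dissAtoms atoms Δ) dom where
  tuples i := Finset.univ.filter
    (fun t : {x // x ∈ dissAtoms atoms Δ i} → dom =>
      restrictTup (show atoms i ⊆ dissAtoms atoms Δ i from Finset.subset_union_left) t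
        ∈ D.tuples i)
  prob i t :=
    D.prob i
      (restrictTup (show atoms i ⊆ dissAtoms atoms Δ i from Finset.subset_union_left) t)

/-- `P(q^Δ)`: the probability of the dissociated query on the dissociated database. -/
def dissProb [Fintype A] [Fintype dom] (atoms Δ : A → Finset V) (D : DB atoms dom) : ℝ :=
  queryProb (dissAtoms atoms Δ) (dissDB atoms Δ D)

/-- The propagation score `ρ(q)`: the minimum of `P(q^Δ)` over all safe dissociations. -/
def propScore [Fintype A] [Fintype dom] (atoms : A → Finset V)
    (D : DB atoms dom) : ℝ :=
  sInf { r : ℝ | ∃ Δ : A → Finset V, SafeDiss atoms ∅ Δ ∧ r = dissProb atoms Δ D }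

/-- the database with all tuple probabilities scaled by the factor `f` -/
def scaleDB {atoms : A → Finset V} (D : DB atoms dom) (f : ℝ) : DB atoms dom where
  tuples := D.tuples
  prob i t := f * D.prob i t

/-- relation `i` is deterministic: all its tuples have probability 1 (otherwise it is
probabilistic) -/
def Deterministic {atoms : A → Finset V} (D : DB atoms dom) (i : A) : Prop :=
  ∀ t ∈ D.tuples i, D.prob i t = 1

/-- The lineage `F_{q,D}` of the Boolean query on `D`: the monotone DNF over the tuples of
`D` whose implicants correspond to the satisfying assignments of the query. -/
def lineage [Fintype A] [Fintype V] [Fintype dom] (atoms : A → Finset V)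
    (D : DB atoms dom) :
    Finset (Finset (Σ i : A, {x // x ∈ atoms i} → dom)) :=
  ((Finset.univ : Finset (V → dom)).filter
      (fun ν => ∀ i : A, restrict atoms i ν ∈ D.tuples i)).image
    (fun ν => Finset.univ.image
      (fun i : A => (⟨i, restrict atoms i ν⟩ : Σ i : A, {x // x ∈ atoms i} → dom)))

/-- The substitution `θ : D^Δ → D` mapping every tuple of a dissociated relation
`R_i^{ȳ_i}` to its projection onto the original variables of `R_i`. -/
def dissTupleMap (atoms Δ : A → Finset V) :
    (Σ i : A, {x // x ∈ dissAtoms atoms Δ i} → dom) →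
      Σ i : A, {x // x ∈ atoms i} → dom :=
  fun t =>
    ⟨t.1, restrictTup (show atoms t.1 ⊆ dissAtoms atoms Δ t.1 from Finset.subset_union_left)
      t.2⟩

/-! ### Functional dependencies -/

/-- `Determines Γ xs y`: the variable `y` is in the closure `xs⁺` of `xs` under the
functional dependencies `Γ`. -/
inductive Determines (Γ : Set (Finset V × V)) : Finset V → V → Prop
  | mem (xs : Finset V) (y : V) (h : y ∈ xs) : Determines Γ xs y
  | step (xs : Finset V) (fd : Finset V × V) (hfd : fd ∈ Γ)
      (hall : ∀ z ∈ fd.1, Determines Γ xs z) : Determines Γ xs fd.2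

/-- The functional dependency `fd` is an FD on the attributes of relation `j` that holds
in the database `D`. -/
def FDHolds (atoms : A → Finset V) (D : DB atoms dom) (j : A) (fd : Finset V × V) : Prop :=
  ∃ h1 : fd.1 ⊆ atoms j, ∃ h2 : fd.2 ∈ atoms j,
    ∀ t ∈ D.tuples j, ∀ t' ∈ D.tuples j,
      (∀ v : V, ∀ hv : v ∈ fd.1, t ⟨v, h1 hv⟩ = t' ⟨v, h1 hv⟩) →
        t ⟨fd.2, h2⟩ = t' ⟨fd.2, h2⟩

/-! ### Query plans -/

/-- Query plans: atoms, duplicate-eliminating projections (given by the retained head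
variables), and k-ary natural joins. -/
inductive Plan (A V : Type*) where
  | atom : A → Plan A V
  | proj : Finset V → Plan A V → Plan A V
  | join : List (Plan A V) → Plan A V

namespace Plan

/-- the head variables of a plan -/
def hvar (atoms : A → Finset V) : Plan A V → Finset V
  | .atom i => atoms i
  | .proj hv _ => hv
  | .join Ps => Ps.attach.foldr (fun P acc => hvar atoms P.1 ∪ acc) ∅
decreasing_by
  all_goals simp_wf
  all_goals try have := List.sizeOf_lt_of_mem P.2
  all_goals omega

/-- the multiset of atoms used by a plan -/
def atomsOf : Plan A V → Multiset A
  | .atom i => {i}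
  | .proj _ P => atomsOf P
  | .join Ps => Ps.attach.foldr (fun P acc => atomsOf P.1 + acc) 0
decreasing_by
  all_goals simp_wf
  all_goals try have := List.sizeOf_lt_of_mem P.2
  all_goals omega

def isProj : Plan A V → Prop
  | .proj _ _ => True
  | _ => False

def isJoin : Plan A V → Prop
  | .join _ => True
  | _ => False

/-- structural well-formedness: projections only retain available variables, joins are at
least binary, and joins and projections alternate -/
def WF (atoms : A → Finset V) : Plan A V → Prop
  | .atom _ => True
  | .proj hv P => hv ⊆ hvar atoms P ∧ ¬ isProj P ∧ WF atoms P
  | .join Ps => 2 ≤ Ps.length ∧ ∀ P ∈ Ps, ¬ isJoin P ∧ WF atoms P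
decreasing_by
  all_goals simp_wf
  all_goals try rename_i h; try have := List.sizeOf_lt_of_mem h
  all_goals omega

/-- a safe plan: at every join, all subplans have the same head variables -/
def Safe (atoms : A → Finset V) : Plan A V → Prop
  | .atom _ => True
  | .proj _ P => Safe atoms P
  | .join Ps => (∀ P ∈ Ps, Safe atoms P) ∧
      ∀ P ∈ Ps, ∀ Q ∈ Ps, hvar atoms P = hvar atoms Q
decreasing_by
  all_goals simp_wf
  all_goals try rename_i h; try have := List.sizeOf_lt_of_mem h
  all_goals omega

/-- `P` is a (well-formed) query plan for the query with atoms `atoms` and head variables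
`H`: it uses every atom exactly once and its output head variables are exactly `H`
(for a Boolean query, `H = ∅`, i.e. all existential variables are projected away). -/
def IsPlanFor [Fintype A] (atoms : A → Finset V) (H : Finset V) (P : Plan A V) : Prop :=
  WF atoms P ∧ atomsOf P = (Finset.univ : Finset A).val ∧ hvar atoms P = H

/-- the join variables: the union of the head variables of a list of subplans -/
def joinVars (atoms : A → Finset V) (Ps : List (Plan A V)) : Finset V :=
  (Ps.map (hvar atoms)).foldr (· ∪ ·) ∅

/-- Identification of plans up to join order, flattening of nested joins, and removal of
trivial (identity) projections. -/
inductive Equiv (atoms : A → Finset V) : Plan A V → Plan A V → Prop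
  | refl (P) : Equiv atoms P P
  | symm {P Q} : Equiv atoms P Q → Equiv atoms Q P
  | trans {P Q R} : Equiv atoms P Q → Equiv atoms Q R → Equiv atoms P R
  | projCongr (hv) {P Q} : Equiv atoms P Q → Equiv atoms (.proj hv P) (.proj hv Q)
  | joinCongr {Ps Qs} : List.Forall₂ (Equiv atoms) Ps Qs →
      Equiv atoms (.join Ps) (.join Qs)
  | joinPerm {Ps Qs} : Ps.Perm Qs → Equiv atoms (.join Ps) (.join Qs)
  | joinFlatten (Ps Qs Rs) :
      Equiv atoms (.join (Ps ++ .join Qs :: Rs)) (.join (Ps ++ Qs ++ Rs))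
  | projTriv {P} (hv) (h : hv = hvar atoms P) : Equiv atoms (.proj hv P) P

/-- The extensional score semantics of a plan evaluated on the database `D`: output tuples
are represented by total valuations `ν : V → dom` (only the values on the head variables
matter; duplicates are represented canonically by the default value `d₀` outside the head
variables).  Joins multiply scores, and duplicate-eliminating projections combine the
scores `s_1, …, s_n` of the tuples projecting to a common output tuple to
`1 - ∏ (1 - s_i)`. -/
def score [Fintype V] [Fintype dom] (atoms : A → Finset V) (D : DB atoms dom) (d₀ : dom) :
    Plan A V → (V → dom) → ℝ
  | .atom i, ν =>
      if restrict atoms i ν ∈ D.tuples i then D.prob i (restrict atoms i ν) else 0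
  | .proj hv P, ν =>
      1 - ∏ μ ∈ Finset.univ.filter (fun μ : V → dom =>
            (∀ v : V, v ∉ hvar atoms P → μ v = d₀) ∧ ∀ v ∈ hv, μ v = ν v),
          (1 - score atoms D d₀ P μ)
  | .join Ps, ν => (Ps.attach.map (fun P => score atoms D d₀ P.1 ν)).prod
decreasing_by
  all_goals simp_wf
  all_goals try have := List.sizeOf_lt_of_mem P.2
  all_goals omega

/-- the score of a Boolean plan -/
def bscore [Fintype V] [Fintype dom] [Inhabited dom] (atoms : A → Finset V)
    (D : DB atoms dom) (P : Plan A V) : ℝ :=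
  score atoms D default P (fun _ => default)

/-- Dropping the dissociated variables from a plan (for a dissociated query) to obtain the
corresponding plan `P^Δ` for the original query: every projection list is restricted to
the variables actually available in the original query. -/
def eraseTo (atoms : A → Finset V) : Plan A V → Plan A V
  | .atom i => .atom i
  | .proj hv P => .proj (hv ∩ hvar atoms (eraseTo atoms P)) (eraseTo atoms P)
  | .join Ps => .join (Ps.attach.map (fun P => eraseTo atoms P.1))
decreasing_by
  all_goals simp_wf
  all_goals try have := List.sizeOf_lt_of_mem P.2
  all_goals omega

/-- The dissociation `Δ^P` corresponding to a plan `P`: for each join operator with join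
variables `JVar = ⋃_j HVar(P_j)`, every relation occurring in subplan `P_j` receives the
variables `JVar ∖ HVar(P_j)`. -/
def dissOf (atoms : A → Finset V) : Plan A V → A → Finset V
  | .atom _ => fun _ => ∅
  | .proj _ P => dissOf atoms P
  | .join Ps => fun i =>
      Ps.attach.foldr (fun P acc =>
        (if i ∈ atomsOf P.1 then
            (joinVars atoms Ps \ hvar atoms P.1) ∪ dissOf atoms P.1 i
          else ∅) ∪ acc) ∅
decreasing_by
  all_goals simp_wf
  all_goals try have := List.sizeOf_lt_of_mem P.2
  all_goals omega

end Plan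

/-- The recursive algorithm `MP` enumerating the minimal query plans of the query with
atom set `S` and head variables `H` (head variables are treated as constants):
* if the query has a single atom, return the projection of that atom onto the head
  variables;
* if the query (after removing the head variables) is disconnected, return any join of
  minimal plans of its connected components (each component keeping the head variables
  occurring in it);
* otherwise, for any minimal cut-set `ys` of the query minus its head variables, return
  the plan projecting `ys` away from any minimal plan of the query with head variables
  `H ∪ ys`. -/
inductive MPrel (atoms : A → Finset V) : Finset A → Finset V → Plan A V → Prop
  | single (i : A) (H : Finset V) : MPrel atoms {i} H (.proj H (.atom i))
  | disc (S : Finset A) (H : Finset V) (parts : List (Finset A)) (Ps : List (Plan A V))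
      (hdup : parts.Nodup) (hlen : 2 ≤ parts.length)
      (hparts : ∀ T : Finset A, T ∈ parts ↔ IsComp (fun i => atoms i \ H) S T)
      (hlen2 : parts.length = Ps.length)
      (hPs : ∀ n : ℕ, ∀ h1 : n < parts.length, ∀ h2 : n < Ps.length,
        MPrel atoms parts[n] (H ∩ (parts[n]).sup atoms) Ps[n]) :
      MPrel atoms S H (.join Ps)
  | conn (S : Finset A) (H : Finset V) (ys : Finset V) (P : Plan A V)
      (hcard : 2 ≤ S.card)
      (hconn : ¬ Disconn (fun i => atoms i \ H) S)
      (hcut : MinCut (fun i => atoms i \ H) S ys)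
      (hP : MPrel atoms S (H ∪ ys) P) :
      MPrel atoms S H (.proj H P)

/-!
The probability of a query depends only on its relevant tuples, those produced by some
satisfying valuation: the remaining tuples marginalise away. Projecting the relevant tuples
of `D^{Δ'}` onto the variables of `q^Δ` is a probability-preserving bijection. It is onto
because dissociating does not change the satisfying valuations, and one-to-one because the
functional dependencies force two satisfying valuations that agree on `x̄_i` to agree on `y`.
Since it also matches the tuples that each satisfying valuation produces, the two sums over
possible worlds agree term by term.
-/

theorem sum_prod_mul_comp_subtypeVal {α : Type*} [Fintype α] [DecidableEq α]
    (w : α → Bool → ℝ) (hw : ∀ a, w a true + w a false = 1) (p : α → Prop)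
    (J : ({a // p a} → Bool) → ℝ) :
    ∑ f : α → Bool, (∏ a, w a (f a)) * J (fun b => f b) =
      ∑ g : {a // p a} → Bool, (∏ b : {a // p a}, w b (g b)) * J g := by
  have hmass : ∑ h : {a // ¬ p a} → Bool, ∏ b : {a // ¬ p a}, w b (h b) = 1 := by
    rw [← Fintype.prod_sum]
    exact Finset.prod_eq_one fun b _ => by rw [Fintype.sum_bool, hw]
  calc ∑ f : α → Bool, (∏ a, w a (f a)) * J (fun b => f b)
      = ∑ f : α → Bool, ((∏ b : {a // p a}, w b (f b)) * ∏ b : {a // ¬ p a}, w b (f b)) *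
          J (fun b => f b) := by
        refine Finset.sum_congr rfl fun f _ => ?_
        rw [Fintype.prod_subtype_mul_prod_subtype p fun a => w a (f a)]
    _ = ∑ gh : ({a // p a} → Bool) × ({a // ¬ p a} → Bool),
          ((∏ b : {a // p a}, w b (gh.1 b)) * ∏ b : {a // ¬ p a}, w b (gh.2 b)) * J gh.1 :=
        Equiv.sum_comp (Equiv.piEquivPiSubtypeProd p fun _ => Bool)
          (fun gh => ((∏ b : {a // p a}, w b (gh.1 b)) * ∏ b : {a // ¬ p a}, w b (gh.2 b)) *
            J gh.1)
    _ = ∑ g : {a // p a} → Bool, (∏ b : {a // p a}, w b (g b)) * J g := by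
        simp only [Fintype.sum_prod_type, mul_right_comm _ _ (J _), ← Finset.mul_sum, hmass,
          mul_one]

namespace DB

variable {atoms atoms₁ atoms₂ : A → Finset V}

abbrev Tuple (D : DB atoms dom) : Type _ := Σ j : A, {t // t ∈ D.tuples j}

def weight (D : DB atoms dom) (s : D.Tuple) (b : Bool) : ℝ :=
  if b then D.prob s.1 s.2.1 else 1 - D.prob s.1 s.2.1

theorem weight_true_add_weight_false (D : DB atoms dom) (s : D.Tuple) :
    D.weight s true + D.weight s false = 1 := by
  simp [weight]

def Satisfies (D : DB atoms dom) (ν : V → dom) : Prop :=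
  ∀ j, restrict atoms j ν ∈ D.tuples j

def Satisfies.tuple {D : DB atoms dom} {ν : V → dom} (hν : D.Satisfies ν) (j : A) : D.Tuple :=
  ⟨j, restrict atoms j ν, hν j⟩

def IsRelevant (D : DB atoms dom) (s : D.Tuple) : Prop :=
  ∃ ν, D.Satisfies ν ∧ restrict atoms s.1 ν = s.2.1

abbrev RelTuple (D : DB atoms dom) : Type _ := {s : D.Tuple // D.IsRelevant s}

def Satisfies.relTuple {D : DB atoms dom} {ν : V → dom} (hν : D.Satisfies ν) (j : A) :
    D.RelTuple :=
  ⟨hν.tuple j, ν, hν, rfl⟩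

def RelTuple.project {D₁ : DB atoms₁ dom} {D₂ : DB atoms₂ dom} (hsub : ∀ j, atoms₂ j ⊆ atoms₁ j)
    (hsat : ∀ ν, D₁.Satisfies ν → D₂.Satisfies ν) (s : D₁.RelTuple) : D₂.RelTuple :=
  have hrel : ∃ ν, D₂.Satisfies ν ∧ restrict atoms₂ s.1.1 ν = restrictTup (hsub s.1.1) s.1.2.1 :=
    let ⟨ν, hν, hs⟩ := s.2
    ⟨ν, hsat ν hν, by rw [← hs]; rfl⟩
  ⟨⟨s.1.1, restrictTup (hsub s.1.1) s.1.2.1, let ⟨ν, hν, hs⟩ := hrel; hs ▸ hν s.1.1⟩, hrel⟩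

theorem RelTuple.exists_eq_relTuple {D : DB atoms dom} (s : D.RelTuple) :
    ∃ ν, ∃ hν : D.Satisfies ν, ∃ j, s = hν.relTuple j := by
  obtain ⟨⟨j, t, ht⟩, ν, hν, hνt⟩ := s
  exact ⟨ν, hν, j, Subtype.ext (Sigma.ext rfl (heq_of_eq (Subtype.ext hνt.symm)))⟩

theorem RelTuple.project_bijective {D₁ : DB atoms₁ dom} {D₂ : DB atoms₂ dom}
    (hsub : ∀ j, atoms₂ j ⊆ atoms₁ j) (hsat : ∀ ν, D₁.Satisfies ν ↔ D₂.Satisfies ν)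
    (hdet : ∀ ν ν', D₁.Satisfies ν → D₁.Satisfies ν' → ∀ j,
      (∀ v ∈ atoms₂ j, ν v = ν' v) → ∀ v ∈ atoms₁ j, ν v = ν' v) :
    Function.Bijective (project hsub fun ν => (hsat ν).1 : D₁.RelTuple → D₂.RelTuple) := by
  constructor
  · intro s s' h
    obtain ⟨ν, hν, j, rfl⟩ := s.exists_eq_relTuple
    obtain ⟨ν', hν', j', rfl⟩ := s'.exists_eq_relTuple
    obtain rfl : j = j' := congrArg (fun s : D₂.RelTuple => s.1.1) h
    have hagree : ∀ v ∈ atoms₂ j, ν v = ν' v := fun v hv =>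
      congrFun (congrArg Subtype.val (eq_of_heq (Sigma.ext_iff.1 (congrArg Subtype.val h)).2))
        ⟨v, hv⟩
    simp only [Satisfies.relTuple, Satisfies.tuple, Subtype.mk.injEq, Sigma.mk.injEq,
      heq_eq_eq, true_and]
    exact funext fun x => hdet ν ν' hν hν' j hagree x.1 x.2
  · intro s
    obtain ⟨ν, hν, j, rfl⟩ := s.exists_eq_relTuple
    exact ⟨((hsat ν).2 hν).relTuple j, rfl⟩

end DB

theorem queryProb_eq_sum_relTuple [Fintype A] {atoms : A → Finset V} (D : DB atoms dom) :
    queryProb atoms D = ∑ g : D.RelTuple → Bool,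
      (∏ s : D.RelTuple, D.weight s.1 (g s)) *
        if ∃ ν, ∃ hν : D.Satisfies ν, ∀ j, g (hν.relTuple j) = true then 1 else 0 := by
  have hholds : ∀ f : D.Tuple → Bool,
      (∃ ν : V → dom, ∀ j, ∃ h : restrict atoms j ν ∈ D.tuples j,
        f ⟨j, restrict atoms j ν, h⟩ = true) ↔
      ∃ ν, ∃ hν : D.Satisfies ν, ∀ j, f (hν.tuple j) = true := fun f =>
    ⟨fun ⟨ν, h⟩ => ⟨ν, fun j => (h j).1, fun j => (h j).2⟩,
      fun ⟨ν, hν, h⟩ => ⟨ν, fun j => ⟨hν j, h j⟩⟩⟩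
  calc queryProb atoms D
      = ∑ f : D.Tuple → Bool, (∏ s, D.weight s (f s)) *
          if ∃ ν, ∃ hν : D.Satisfies ν, ∀ j, f (hν.tuple j) = true then 1 else 0 := by
        rw [queryProb, ← (Equiv.piCurry fun j (_ : {t // t ∈ D.tuples j}) => Bool).sum_comp]
        refine Finset.sum_congr rfl fun f _ => ?_
        rw [← Finset.univ_sigma_univ, Finset.prod_sigma]
        exact congrArg₂ _ rfl (if_congr (hholds f) rfl rfl)
    _ = _ := sum_prod_mul_comp_subtypeVal _ D.weight_true_add_weight_false D.IsRelevant
          fun g => if ∃ ν, ∃ hν : D.Satisfies ν, ∀ j, g (hν.relTuple j) = true then 1 else 0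

theorem queryProb_eq_of_relTupleEquiv [Fintype A] {atoms₁ atoms₂ : A → Finset V}
    (D₁ : DB atoms₁ dom) (D₂ : DB atoms₂ dom) (e : D₁.RelTuple ≃ D₂.RelTuple)
    (hprob : ∀ s, D₂.prob (e s).1.1 (e s).1.2.1 = D₁.prob s.1.1 s.1.2.1)
    (hsat : ∀ ν, D₁.Satisfies ν ↔ D₂.Satisfies ν)
    (htuple : ∀ ν (hν : D₁.Satisfies ν) j, e (hν.relTuple j) = ((hsat ν).1 hν).relTuple j) :
    queryProb atoms₁ D₁ = queryProb atoms₂ D₂ := by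
  rw [queryProb_eq_sum_relTuple, queryProb_eq_sum_relTuple]
  refine Fintype.sum_equiv (e.arrowCongr (Equiv.refl Bool)) _ _ fun g => ?_
  have hg : ∀ s, e.arrowCongr (Equiv.refl Bool) g (e s) = g s := fun s => by
    simp [Equiv.arrowCongr_apply]
  congr 1
  · rw [← e.prod_comp]
    simp only [hg, DB.weight, hprob]
  · refine if_congr ⟨?_, ?_⟩ rfl rfl
    · rintro ⟨ν, hν, h⟩
      exact ⟨ν, (hsat ν).1 hν, fun j => by rw [← htuple, hg]; exact h j⟩
    · rintro ⟨ν, hν, h⟩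
      refine ⟨ν, (hsat ν).2 hν, fun j => ?_⟩
      rw [← hg, htuple]
      exact h j

theorem queryProb_eq_of_project [Fintype A] {atoms₁ atoms₂ : A → Finset V}
    (D₁ : DB atoms₁ dom) (D₂ : DB atoms₂ dom) (hsub : ∀ j, atoms₂ j ⊆ atoms₁ j)
    (hsat : ∀ ν, D₁.Satisfies ν ↔ D₂.Satisfies ν)
    (hprob : ∀ j, ∀ t ∈ D₁.tuples j, D₂.prob j (restrictTup (hsub j) t) = D₁.prob j t)
    (hdet : ∀ ν ν', D₁.Satisfies ν → D₁.Satisfies ν' → ∀ j,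
      (∀ v ∈ atoms₂ j, ν v = ν' v) → ∀ v ∈ atoms₁ j, ν v = ν' v) :
    queryProb atoms₁ D₁ = queryProb atoms₂ D₂ :=
  queryProb_eq_of_relTupleEquiv D₁ D₂
    (Equiv.ofBijective _ (DB.RelTuple.project_bijective hsub hsat hdet))
    (fun s => hprob _ _ s.1.2.2) hsat fun _ _ _ => rfl

theorem satisfies_dissDB_iff [Fintype dom] (atoms Δ : A → Finset V) (D : DB atoms dom)
    (ν : V → dom) : (dissDB atoms Δ D).Satisfies ν ↔ D.Satisfies ν := by
  simp only [DB.Satisfies, dissDB, Finset.mem_filter, Finset.mem_univ, true_and]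
  rfl

theorem dissProb_eq_of_determined [Fintype A] [Fintype dom] (atoms : A → Finset V)
    (D : DB atoms dom) {Δ Δ' : A → Finset V}
    (hsub : ∀ j, dissAtoms atoms Δ j ⊆ dissAtoms atoms Δ' j)
    (hdet : ∀ ν ν', D.Satisfies ν → D.Satisfies ν' → ∀ j,
      (∀ v ∈ dissAtoms atoms Δ j, ν v = ν' v) → ∀ v ∈ dissAtoms atoms Δ' j, ν v = ν' v) :
    dissProb atoms Δ' D = dissProb atoms Δ D :=
  queryProb_eq_of_project _ _ hsub
    (fun ν => by rw [satisfies_dissDB_iff, satisfies_dissDB_iff]) (fun _ _ _ => rfl)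
    (by simpa only [satisfies_dissDB_iff] using hdet)

theorem Determines.eq_of_satisfies {atoms : A → Finset V} {D : DB atoms dom}
    {Γ : Set (Finset V × V)} (hΓ : ∀ fd ∈ Γ, ∃ j : A, FDHolds atoms D j fd)
    {ν ν' : V → dom} (hν : D.Satisfies ν) (hν' : D.Satisfies ν') {xs : Finset V} {y : V}
    (hy : Determines Γ xs y) (hxs : ∀ v ∈ xs, ν v = ν' v) : ν y = ν' y := by
  induction hy with
  | mem y h => exact hxs y h
  | step fd hfd _ ih =>
    obtain ⟨j, _, _, hfd⟩ := hΓ fd hfd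
    exact hfd _ (hν j) _ (hν' j) fun v hv => ih v hv

theorem mem_dissAtoms_update_union_singleton (atoms Δ : A → Finset V) (i j : A) (y v : V) :
    v ∈ dissAtoms atoms (Function.update Δ i (Δ i ∪ {y})) j ↔
      v ∈ dissAtoms atoms Δ j ∨ j = i ∧ v = y := by
  rcases eq_or_ne j i with rfl | hj
  · simp only [dissAtoms, Function.update_self, Finset.mem_union, Finset.mem_singleton, true_and]
    tauto
  · simp [dissAtoms, hj]

theorem fd_dissociation_invariant_general
    {A V dom : Type*} [Fintype A] [Fintype dom]
    (atoms : A → Finset V) (D : DB atoms dom)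
    (Γ : Set (Finset V × V)) (hΓ : ∀ fd ∈ Γ, ∃ j : A, FDHolds atoms D j fd)
    (Δ : A → Finset V)
    (i : A) (y : V) (hy : Determines Γ (atoms i) y) :
    dissProb atoms (Function.update Δ i (Δ i ∪ {y})) D = dissProb atoms Δ D := by
  refine dissProb_eq_of_determined atoms D
    (fun j v hv => (mem_dissAtoms_update_union_singleton atoms Δ i j y v).2 (.inl hv))
    fun ν ν' hν hν' j hagree v hv => ?_
  rcases (mem_dissAtoms_update_union_singleton atoms Δ i j y v).1 hv with hv | ⟨rfl, rfl⟩
  · exact hagree v hv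
  · exact hy.eq_of_satisfies hΓ hν hν' fun u hu => hagree u (Finset.mem_union_left _ hu)

/-- Dissociation and functional dependencies.  Let `D` satisfy a set
`Γ` of functional dependencies, each holding on the attributes of a single relation of
`D`.  Dissociating relation `R_i` on any variable `y ∈ x̄_i⁺ ∖ x̄_i` (where `x̄_i⁺` is the
closure of the variables of `R_i` under `Γ`) does not change the probability: if `Δ'` is
obtained from a dissociation `Δ` by additionally adding such a `y` to `ȳ_i`, then
`P(q^{Δ'}) = P(q^Δ)`. -/
theorem fd_dissociation_invariant
    {A V dom : Type*} [Fintype A] [Fintype V] [Fintype dom]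
    (atoms : A → Finset V) (D : DB atoms dom) (hD : D.Valid)
    (Γ : Set (Finset V × V)) (hΓ : ∀ fd ∈ Γ, ∃ j : A, FDHolds atoms D j fd)
    (Δ : A → Finset V) (hΔ : IsDiss atoms ∅ Δ)
    (i : A) (y : V) (hy : Determines Γ (atoms i) y)
    (hyv : y ∈ varsOf atoms) (hyi : y ∉ atoms i) :
    dissProb atoms (Function.update Δ i (Δ i ∪ {y})) D = dissProb atoms Δ D :=
  fd_dissociation_invariant_general atoms D Γ hΓ Δ i y hy

end

end PDB
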